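/- arXiv:1804.03011 — 2 statements merged into one kernel-verified Lean document; each statement's English description precedes it below -/
import Mathlib

section
/- Let X be a type and L ⊆ X⁎ a language. The following are equivalent: (a) L is regular, i.e. accepted by a deterministic automaton with a finite state type; (b) there exist a finite monoid M, a monoid homomorphism e : X⁎ → M and a subset F ⊆ M with L = e⁻¹(F); (c) the syntactic monoid X⁎/≡_L is finite, where ≡_L is the syntactic congruence of L. -/
universe u

/-- The syntactic congruence of a language `L` over `X`:
`u ≡_L v` iff `∀ x y, x·u·y ∈ L ↔ x·v·y ∈ L`. -/
def synCon {X : Type u} (L : Set (FreeMonoid X)) : Con (FreeMonoid X) where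
  r u v := ∀ x y : FreeMonoid X, x * u * y ∈ L ↔ x * v * y ∈ L
  iseqv := ⟨fun _ _ _ => Iff.rfl, fun h x y => (h x y).symm,
    fun h₁ h₂ x y => (h₁ x y).trans (h₂ x y)⟩
  mul' := by
    intro a b c d h₁ h₂ x y
    have h₃ := h₁ x (c * y)
    have h₄ := h₂ (x * b) y
    simp only [← mul_assoc] at h₃
    simp only [mul_assoc] at h₃ h₄ ⊢
    exact h₃.trans h₄

section aux

variable {X : Type u} (L : Language X)

private abbrev L' (L : Language X) : Set (FreeMonoid X) :=
  {w : FreeMonoid X | FreeMonoid.toList w ∈ L}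

private def transHom {σ : Type u} (A : DFA X σ) :
    FreeMonoid X →* (Function.End σ)ᵐᵒᵖ :=
  FreeMonoid.lift fun x => MulOpposite.op ((fun q => A.step q x) : Function.End σ)

private theorem transHom_eval {σ : Type u} (A : DFA X σ) (w : List X) (q : σ) :
    MulOpposite.unop (transHom A (FreeMonoid.ofList w)) q = A.evalFrom q w := by
  induction w generalizing q with
  | nil =>
    show MulOpposite.unop (transHom A 1) q = q
    rw [map_one]; rfl
  | cons a w ih =>
    rw [FreeMonoid.ofList_cons, map_mul]
    have h1 : A.evalFrom q (a :: w) = A.evalFrom (A.step q a) w := rfl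
    rw [h1, ← ih (A.step q a)]
    rfl

/-- (a) → (b) -/
private theorem dfa_to_monoid
    (h : ∃ (σ : Type u) (_ : Finite σ) (M : DFA X σ), M.accepts = L) :
    ∃ (M : Type u) (_ : Monoid M) (_ : Finite M) (e : FreeMonoid X →* M) (F : Set M),
      L' L = ⇑e ⁻¹' F := by
  obtain ⟨σ, hσ, A, hA⟩ := h
  haveI := hσ
  haveI : Finite (Function.End σ) := inferInstanceAs (Finite (σ → σ))
  haveI : Finite (Function.End σ)ᵐᵒᵖ := Finite.of_equiv _ MulOpposite.opEquiv
  refine ⟨(Function.End σ)ᵐᵒᵖ, inferInstance, inferInstance, transHom A,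
    {m | MulOpposite.unop m A.start ∈ A.accept}, ?_⟩
  ext w
  simp only [Set.mem_setOf_eq, Set.mem_preimage]
  have h2 := transHom_eval A (FreeMonoid.toList w) A.start
  rw [FreeMonoid.ofList_toList] at h2
  rw [← hA, DFA.mem_accepts]
  show A.eval w.toList ∈ A.accept ↔ _
  rw [DFA.eval, ← h2]

/-- (b) → (c) -/
private theorem monoid_to_syn
    (h : ∃ (M : Type u) (_ : Monoid M) (_ : Finite M) (e : FreeMonoid X →* M) (F : Set M),
      L' L = ⇑e ⁻¹' F) :
    Finite (synCon (L' L)).Quotient := by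
  obtain ⟨M, _, _, e, F, hF⟩ := h
  have hle : ∀ u v : FreeMonoid X, e u = e v → (synCon (L' L)) u v := by
    intro u v huv x y
    have : ∀ w : FreeMonoid X, (w ∈ L' L) ↔ e w ∈ F := fun w => by
      rw [hF]; rfl
    rw [this, this, map_mul, map_mul, map_mul, map_mul, huv]
  have : Function.Surjective (fun m : Set.range e =>
      ((synCon (L' L)).mk' (Classical.choose m.2) : (synCon (L' L)).Quotient)) := by
    intro q
    obtain ⟨w, rfl⟩ := Con.mk'_surjective q
    refine ⟨⟨e w, ⟨w, rfl⟩⟩, ?_⟩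
    exact (Con.eq _).2 (hle _ _ (Classical.choose_spec (⟨w, rfl⟩ : ∃ u, e u = e w)))
  exact Finite.of_surjective _ this

/-- (c) → (a) -/
private theorem syn_to_dfa
    (h : Finite (synCon (L' L)).Quotient) :
    ∃ (σ : Type u) (_ : Finite σ) (M : DFA X σ), M.accepts = L := by
  set c := synCon (L' L) with hc
  have wd : ∀ u v : FreeMonoid X, c u v → ((u ∈ L' L) = (v ∈ L' L)) := by
    intro u v huv
    have := huv 1 1
    simp only [one_mul, mul_one] at this
    exact propext this
  refine ⟨c.Quotient, h,
    { step := fun q x => q * c.mk' (FreeMonoid.of x)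
      start := 1
      accept := {q | Quotient.liftOn' q (fun w => w ∈ L' L) wd} }, ?_⟩
  have key : ∀ (w : List X) (q : c.Quotient),
      DFA.evalFrom ⟨fun q x => q * c.mk' (FreeMonoid.of x), 1,
        {q | Quotient.liftOn' q (fun w => w ∈ L' L) wd}⟩ q w
        = q * c.mk' (FreeMonoid.ofList w) := by
    intro w
    induction w with
    | nil => intro q; simp [DFA.evalFrom, FreeMonoid.ofList_nil]
    | cons a w ih =>
      intro q
      show DFA.evalFrom _ (q * c.mk' (FreeMonoid.of a)) w = _
      rw [ih, FreeMonoid.ofList_cons, map_mul, mul_assoc]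
  ext w
  rw [DFA.mem_accepts]
  show _ ∈ _ ↔ w ∈ L
  rw [DFA.eval, key w 1, one_mul]
  show Quotient.liftOn' (c.mk' (FreeMonoid.ofList w)) (fun u => u ∈ L' L) wd ↔ w ∈ L
  exact Iff.rfl

end aux

/-- For a language `L` over `X` the following are equivalent:
(a) `L` is regular (accepted by a DFA with finite state type);
(b) `L` is recognized by a finite monoid;
(c) the syntactic monoid `X⁎/≡_L` is finite. -/
theorem regular_iff_finite_recognizer_iff_finite_syntactic_monoid
    {X : Type u} (L : Language X) :
    ((∃ (σ : Type u) (_ : Finite σ) (M : DFA X σ), M.accepts = L) ↔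
      (∃ (M : Type u) (_ : Monoid M) (_ : Finite M) (e : FreeMonoid X →* M) (F : Set M),
        {w : FreeMonoid X | FreeMonoid.toList w ∈ L} = ⇑e ⁻¹' F)) ∧
    ((∃ (M : Type u) (_ : Monoid M) (_ : Finite M) (e : FreeMonoid X →* M) (F : Set M),
        {w : FreeMonoid X | FreeMonoid.toList w ∈ L} = ⇑e ⁻¹' F) ↔
      Finite (synCon {w : FreeMonoid X | FreeMonoid.toList w ∈ L}).Quotient) := by
  refine ⟨⟨dfa_to_monoid L, fun hb => syn_to_dfa L (monoid_to_syn L hb)⟩,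
    ⟨monoid_to_syn L, fun hc => dfa_to_monoid L (syn_to_dfa L hc)⟩⟩
end

section
/- Let X be a type and T the endofunctor on types given by T Q = Bool × (X → Q). Let ρT be the colimit, in the category of T-coalgebras, of the inclusion of the full subcategory of T-coalgebras whose carrier is a finite type. Then there is a bijection between the elements of the underlying type of ρT and the regular languages over X (languages L ⊆ X⁎ accepted by some deterministic automaton with finite state type): each element of ρT arises as h_Q(q₀) for a finite coalgebra (Q, ⟨f, τ⟩) and a state q₀ ∈ Q (where h_Q is the colimit injection), and it corresponds to the language { a₁⋯a_n ∈ X⁎ | f(τ(⋯τ(τ(q₀)(a₁))(a₂)⋯)(a_n)) = true } accepted from q₀; this assignment is well defined and bijective. -/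
open CategoryTheory CategoryTheory.Limits

universe u

/-- The endofunctor `T Q = Bool × (X → Q)` on types. -/
def Tfun (X : Type u) : Type u ⥤ Type u where
  obj Q := Bool × (X → Q)
  map f := TypeCat.ofHom fun p => (p.1, fun a => f (p.2 a))

/-- The language accepted from a state `q₀` of a `T`-coalgebra: the set of words whose
run from `q₀` ends in a state with output `true`. -/
def coalgLang {X : Type u} (A : Endofunctor.Coalgebra (Tfun X)) (q₀ : A.V) :
    Set (List X) :=
  {w : List X | Prod.fst (A.str (List.foldl (fun q a => Prod.snd (A.str q) a) q₀ w)) = true}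

namespace Aux

variable {X : Type u}

/-- The coalgebra of (boolean) languages. -/
def nu (X : Type u) : Endofunctor.Coalgebra (Tfun X) where
  V := List X → Bool
  str := TypeCat.ofHom fun (L : List X → Bool) => (L [], fun a w => L (a :: w))

/-- The behavior map into the language coalgebra. -/
def beh (A : Endofunctor.Coalgebra (Tfun X)) (q : A.V) : List X → Bool :=
  fun w => Prod.fst (A.str (List.foldl (fun q a => Prod.snd (A.str q) a) q w))

lemma beh_nil (A : Endofunctor.Coalgebra (Tfun X)) (q : A.V) :
    beh A q [] = Prod.fst (A.str q) := rfl

lemma beh_cons (A : Endofunctor.Coalgebra (Tfun X)) (q : A.V) (a : X) (w : List X) :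
    beh A q (a :: w) = beh A (Prod.snd (A.str q) a) w := rfl

/-- `beh` as a coalgebra morphism. -/
def behHom (A : Endofunctor.Coalgebra (Tfun X)) : A ⟶ nu X where
  f := TypeCat.ofHom (beh A)
  h := by
    ext q
    show (Tfun X).map (TypeCat.ofHom (beh A)) (A.str q) = (nu X).str (beh A q)
    simp only [Tfun, nu]
    ext
    · rfl
    · rfl

/-- behavior commutes with coalgebra morphisms -/
lemma beh_hom {A B : Endofunctor.Coalgebra (Tfun X)} (m : A ⟶ B) (q : A.V) :
    beh B (m.f q) = beh A q := by
  funext w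
  induction w generalizing q with
  | nil =>
    have := types_congr_hom m.h q
    have h1 : (Tfun X).map m.f (A.str q) = B.str (m.f q) := this
    rw [beh_nil, beh_nil, ← h1]; rfl
  | cons a w ih =>
    have h1 : (Tfun X).map m.f (A.str q) = B.str (m.f q) := types_congr_hom m.h q
    rw [beh_cons, beh_cons, ← h1]
    exact ih _

end Aux

namespace Aux
variable {X : Type u}

/-- Sum of two coalgebras. -/
def sumCoalg (A B : Endofunctor.Coalgebra (Tfun X)) : Endofunctor.Coalgebra (Tfun X) where
  V := A.V ⊕ B.V
  str := TypeCat.ofHom fun (q : A.V ⊕ B.V) => (Sum.rec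
    (fun a => (Prod.fst (A.str a), fun x => Sum.inl (Prod.snd (A.str a) x)))
    (fun b => (Prod.fst (B.str b), fun x => Sum.inr (Prod.snd (B.str b) x))) q :
      Bool × (X → A.V ⊕ B.V))

def sumInl (A B : Endofunctor.Coalgebra (Tfun X)) : A ⟶ sumCoalg A B where
  f := TypeCat.ofHom Sum.inl
  h := by ext q; rfl

def sumInr (A B : Endofunctor.Coalgebra (Tfun X)) : B ⟶ sumCoalg A B where
  f := TypeCat.ofHom Sum.inr
  h := by ext q; rfl

/-- The image of `beh` as a subcoalgebra of `nu`. -/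
def imgCoalg (A : Endofunctor.Coalgebra (Tfun X)) : Endofunctor.Coalgebra (Tfun X) where
  V := Set.range (beh A)
  str := TypeCat.ofHom fun (L : Set.range (beh A)) => ((L.1 [], fun a => ⟨fun w => L.1 (a :: w), by
    obtain ⟨q, hq⟩ := L.2
    exact ⟨Prod.snd (A.str q) a, by funext w; rw [← beh_cons, hq]⟩⟩) :
      Bool × (X → Set.range (beh A)))

def imgHom (A : Endofunctor.Coalgebra (Tfun X)) : A ⟶ imgCoalg A where
  f := TypeCat.ofHom fun q => (⟨beh A q, q, rfl⟩ : Set.range (beh A))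
  h := by
    ext q
    show (Prod.fst (A.str q), fun a => (⟨beh A (Prod.snd (A.str q) a), _, rfl⟩ : Set.range (beh A)))
      = (imgCoalg A).str ⟨beh A q, q, rfl⟩
    refine Prod.ext rfl ?_
    funext a
    exact Subtype.ext (by funext w; exact (beh_cons A q a w).symm)

instance (A : Endofunctor.Coalgebra (Tfun X)) [Finite A.V] : Finite (imgCoalg A).V := by
  unfold imgCoalg
  exact Set.finite_range (beh A) |>.to_subtype

end Aux

namespace Aux

variable {X : Type u}

abbrev FinP (X : Type u) : Endofunctor.Coalgebra (Tfun X) → Prop := fun A => Finite A.V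

variable (c : Cocone (ObjectProperty.ι (FinP X))) (hc : IsColimit c)

/-- The cocone into the language coalgebra. -/
def nuCocone : Cocone (ObjectProperty.ι (FinP X)) where
  pt := nu X
  ι := { app := fun A => behHom A.obj
         naturality := by
           intro A B m
           ext q
           show beh B.obj (m.hom.f q) = beh A.obj q
           exact beh_hom m.hom q }

lemma key (A : ObjectProperty.FullSubcategory (FinP X)) (q : A.obj.V) :
    c.pt.str ((c.ι.app A).f q) =
      (Prod.fst (A.obj.str q), fun a => (c.ι.app A).f (Prod.snd (A.obj.str q) a)) :=
  (types_congr_hom (c.ι.app A).h q).symm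

/-- The predicate "x is in the image of some colimit injection". -/
def S : c.pt.V → Prop := fun x =>
  ∃ (A : ObjectProperty.FullSubcategory (FinP X)) (q : A.obj.V), (c.ι.app A).f q = x

lemma S_closed (y : c.pt.V) (hy : S c y) (a : X) : S c (Prod.snd (c.pt.str y) a) := by
  obtain ⟨A, q, rfl⟩ := hy
  rw [key c A q]
  exact ⟨A, Prod.snd (A.obj.str q) a, rfl⟩

/-- The reachable subcoalgebra of the colimit. -/
def reach : Endofunctor.Coalgebra (Tfun X) where
  V := {y : c.pt.V // S c y}
  str := TypeCat.ofHom fun (y : {y : c.pt.V // S c y}) => ((Prod.fst (c.pt.str y.1),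
    fun a => ⟨Prod.snd (c.pt.str y.1) a, S_closed c y.1 y.2 a⟩) : Bool × (X → {y : c.pt.V // S c y}))

def reachIncl : reach c ⟶ c.pt where
  f := TypeCat.ofHom Subtype.val
  h := by ext y; rfl

def reachLeg (A : ObjectProperty.FullSubcategory (FinP X)) :
    (ObjectProperty.ι (FinP X)).obj A ⟶ reach c where
  f := TypeCat.ofHom fun q => (⟨(c.ι.app A).f q, A, q, rfl⟩ : {y : c.pt.V // S c y})
  h := by
    ext q
    refine Prod.ext ?_ (funext fun a => Subtype.ext ?_)
    · exact (congrArg Prod.fst (key c A q)).symm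
    · show (c.ι.app A).f (Prod.snd (A.obj.str q) a) = Prod.snd (c.pt.str ((c.ι.app A).f q)) a
      rw [key c A q]

def reachCocone : Cocone (ObjectProperty.ι (FinP X)) where
  pt := reach c
  ι := { app := reachLeg c
         naturality := by
           intro A A' m
           ext q
           refine Subtype.ext ?_
           have := congrArg Endofunctor.Coalgebra.Hom.f (c.w m)
           exact types_congr_hom this q }

lemma joint_surj (hc : IsColimit c) (x : c.pt.V) :
    ∃ (A : ObjectProperty.FullSubcategory (FinP X)) (q₀ : A.obj.V), x = (c.ι.app A).f q₀ := by
  have h1 : hc.desc (reachCocone c) ≫ reachIncl c = 𝟙 c.pt := by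
    apply hc.hom_ext
    intro A
    erw [hc.fac_assoc]
    ext q
    rfl
  have hx : ((hc.desc (reachCocone c)).f x).1 = x := by
    have := congrArg Endofunctor.Coalgebra.Hom.f h1
    exact types_congr_hom this x
  obtain ⟨A, q, hq⟩ := ((hc.desc (reachCocone c)).f x).2
  exact ⟨A, q, by rw [hq, hx]⟩

lemma inj_step (A B : ObjectProperty.FullSubcategory (FinP X)) (q : A.obj.V) (p : B.obj.V)
    (h : beh A.obj q = beh B.obj p) :
    (c.ι.app A).f q = (c.ι.app B).f p := by
  haveI : Finite A.obj.V := A.property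
  haveI : Finite B.obj.V := B.property
  let C : ObjectProperty.FullSubcategory (FinP X) := ⟨sumCoalg A.obj B.obj, by
    show Finite (A.obj.V ⊕ B.obj.V); infer_instance⟩
  haveI : Finite C.obj.V := by show Finite (A.obj.V ⊕ B.obj.V); infer_instance
  let D : ObjectProperty.FullSubcategory (FinP X) := ⟨imgCoalg C.obj,
    Set.Finite.to_subtype (Set.finite_range (beh C.obj))⟩
  have hA : (c.ι.app A).f q = (c.ι.app C).f (Sum.inl q) := by
    have := c.w (show A ⟶ C from ObjectProperty.homMk (sumInl A.obj B.obj))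
    have := congrArg Endofunctor.Coalgebra.Hom.f this
    exact (types_congr_hom this q).symm
  have hB : (c.ι.app B).f p = (c.ι.app C).f (Sum.inr p) := by
    have := c.w (show B ⟶ C from ObjectProperty.homMk (sumInr A.obj B.obj))
    have := congrArg Endofunctor.Coalgebra.Hom.f this
    exact (types_congr_hom this p).symm
  have hCD : ∀ r : C.obj.V, (c.ι.app C).f r = (c.ι.app D).f ((imgHom C.obj).f r) := by
    intro r
    have := c.w (show C ⟶ D from ObjectProperty.homMk (imgHom C.obj))
    have := congrArg Endofunctor.Coalgebra.Hom.f this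
    exact (types_congr_hom this r).symm
  have hbeh : (imgHom C.obj).f (Sum.inl q) = (imgHom C.obj).f (Sum.inr p) := by
    refine Subtype.ext ?_
    show beh C.obj (Sum.inl q) = beh C.obj (Sum.inr p)
    rw [show (Sum.inl q : C.obj.V) = (sumInl A.obj B.obj).f q from rfl,
      show (Sum.inr p : C.obj.V) = (sumInr A.obj B.obj).f p from rfl,
      beh_hom, beh_hom, h]
  rw [hA, hB]
  exact (hCD (Sum.inl q)).trans ((congrArg (c.ι.app D).f hbeh).trans (hCD (Sum.inr p)).symm)

end Aux

/-- Let `ρT` be the colimit, in the category of coalgebras for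
`T Q = Bool × (X → Q)`, of the inclusion of the full subcategory of coalgebras with
finite carrier.  Then the elements of `ρT` are in bijection with the regular languages
over `X`: there is a map `Φ` from the carrier of `ρT` to languages which sends
`h_Q(q₀)` to the language accepted from `q₀`, every element of `ρT` is of the form
`h_Q(q₀)`, and `Φ` is injective with range exactly the regular languages. -/
theorem rational_coalgebra_carries_regular_languages {X : Type u}
    (c : Cocone (ObjectProperty.ι
      (fun A : Endofunctor.Coalgebra (Tfun X) => Finite A.V)))
    (hc : IsColimit c) :
    ∃ Φ : c.pt.V → Set (List X),
      -- `Φ` sends `h_Q(q₀)` to the language accepted from `q₀`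
      (∀ (A : ObjectProperty.FullSubcategory (fun A : Endofunctor.Coalgebra (Tfun X) => Finite A.V))
        (q₀ : A.obj.V), Φ ((c.ι.app A).f q₀) = coalgLang A.obj q₀) ∧
      -- every element of `ρT` arises as `h_Q(q₀)` for some finite coalgebra `Q`
      (∀ x : c.pt.V,
        ∃ (A : ObjectProperty.FullSubcategory (fun A : Endofunctor.Coalgebra (Tfun X) => Finite A.V))
          (q₀ : A.obj.V), x = (c.ι.app A).f q₀) ∧
      -- `Φ` is a bijection onto the regular languages
      Function.Injective Φ ∧
      Set.range Φ =
        {L : Set (List X) | ∃ (σ : Type u) (_ : Finite σ) (M : DFA X σ),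
          ∀ w : List X, w ∈ M.accepts ↔ w ∈ L} := by
  classical
  let d : c.pt ⟶ Aux.nu X := hc.desc (Aux.nuCocone)
  have hd : ∀ (A : ObjectProperty.FullSubcategory (Aux.FinP X)) (q : A.obj.V),
      d.f ((c.ι.app A).f q) = Aux.beh A.obj q := by
    intro A q
    have h1 := hc.fac Aux.nuCocone A
    have h2 := congrArg Endofunctor.Coalgebra.Hom.f h1
    exact types_congr_hom h2 q
  have hΦlang : ∀ (A : ObjectProperty.FullSubcategory (Aux.FinP X)) (q₀ : A.obj.V),
      {w | d.f ((c.ι.app A).f q₀) w = true} = coalgLang A.obj q₀ := by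
    intro A q₀
    ext w
    simp only [Set.mem_setOf_eq, hd A q₀]
    rfl
  refine ⟨fun x => {w | d.f x w = true}, hΦlang, Aux.joint_surj c hc, ?_, ?_⟩
  · -- injectivity
    intro x y hxy
    obtain ⟨A, q, rfl⟩ := Aux.joint_surj c hc x
    obtain ⟨B, p, rfl⟩ := Aux.joint_surj c hc y
    apply Aux.inj_step c A B q p
    funext w
    have : (Aux.beh A.obj q w = true) ↔ (Aux.beh B.obj p w = true) := by
      rw [← hd A q, ← hd B p]
      exact Set.ext_iff.mp hxy w
    exact Bool.coe_iff_coe.mp this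
  · -- range = regular languages
    ext L
    constructor
    · rintro ⟨x, rfl⟩
      obtain ⟨A, q, rfl⟩ := Aux.joint_surj c hc x
      haveI : Finite A.obj.V := A.property
      refine ⟨A.obj.V, inferInstance,
        { step := fun s a => Prod.snd (A.obj.str s) a
          start := q
          accept := {s | Prod.fst (A.obj.str s) = true} }, fun w => ?_⟩
      show w ∈ DFA.accepts _ ↔ w ∈ {w | d.f ((c.ι.app A).f q) w = true}
      rw [hΦlang A q, DFA.mem_accepts]
      exact Iff.rfl
    · rintro ⟨σ, hσ, M, hM⟩
      haveI := hσ
      let A : Endofunctor.Coalgebra (Tfun X) :=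
        { V := σ
          str := TypeCat.ofHom fun (s : σ) => ((decide (s ∈ M.accept), fun a => M.step s a) :
            Bool × (X → σ)) }
      refine ⟨(c.ι.app ⟨A, hσ⟩).f M.start, ?_⟩
      show {w | d.f ((c.ι.app ⟨A, hσ⟩).f M.start) w = true} = L
      rw [hΦlang ⟨A, hσ⟩ M.start]
      ext w
      rw [← hM w, DFA.mem_accepts]
      show decide (M.eval w ∈ M.accept) = true ↔ M.eval w ∈ M.accept
      exact decide_eq_true_iff
end
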